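/- Let m > 0, 1 < α ≤ 4/3, 0 ≤ λ < 1. The l = 0 Touchard series Φ(0,m,z) satisfies the N*(λ,α) coefficient condition Σ_{n=2}^∞ n[n − (1+nλ−λ)α](m^{n-1}/(n-1)!)e^{-m} ≤ α−1 if and only if (1−αλ)(m^2+m) + (2−αλ−α)m + (1−α)(1 − e^{-m}) ≤ α − 1. -/
import Mathlib

private lemma fact_cast_ne (n : ℕ) : ((n.factorial : ℝ)) ≠ 0 :=
  Nat.cast_ne_zero.mpr n.factorial_ne_zero

/-- Specialization of Theorem 3.2 to l = 0: the `N*(λ,α)` coefficient condition for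
`Φ(0,m,z)` holds iff `(1−αλ)(m²+m) + (2−αλ−α)m + (1−α)(1 − e^{-m}) ≤ α − 1`. -/
theorem touchard_l_zero_N_star_iff (m α lam : ℝ) (hm : 0 < m)
    (hα : 1 < α) (hα' : α ≤ 4 / 3) (hlam : 0 ≤ lam) (hlam' : lam < 1) :
    (∑' n : ℕ, ((n + 2 : ℕ) : ℝ) * (((n + 2 : ℕ) : ℝ) - (1 + ((n + 2 : ℕ) : ℝ) * lam - lam) * α) *
        (m ^ (n + 1) / ((n + 1).factorial : ℝ)) * Real.exp (-m))
      ≤ α - 1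
    ↔ (1 - α * lam) * (m ^ 2 + m) + (2 - α * lam - α) * m + (1 - α) * (1 - Real.exp (-m))
        ≤ α - 1 := by
  set A : ℝ := 1 - lam * α with hA
  set C1 : ℝ := 3 - 2 * (lam * α) - α with hC1
  set C0 : ℝ := 1 - α with hC0
  set E : ℝ := Real.exp (-m) with hEdef
  have hS : Summable (fun n : ℕ => m ^ n / (n.factorial : ℝ)) :=
    Real.summable_pow_div_factorial m
  have hE : Real.exp m = ∑' n : ℕ, m ^ n / (n.factorial : ℝ) := by
    rw [Real.exp_eq_exp_ℝ, NormedSpace.exp_eq_tsum_div]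
  -- the three basic shifted series
  have hS0 : Summable (fun n : ℕ => m ^ (n + 1) / (((n + 1).factorial : ℕ) : ℝ)) :=
    (summable_nat_add_iff (f := fun n : ℕ => m ^ n / (n.factorial : ℝ)) 1).mpr hS
  have hT0 : (∑' n : ℕ, m ^ (n + 1) / (((n + 1).factorial : ℕ) : ℝ)) = Real.exp m - 1 := by
    have := Summable.tsum_eq_zero_add hS
    simp only [pow_zero, Nat.factorial_zero, Nat.cast_one, div_one] at this
    rw [hE, this]; ring
  have hS1 : Summable (fun n : ℕ => m * (m ^ n / (n.factorial : ℝ))) := hS.mul_left m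
  have hT1 : (∑' n : ℕ, m * (m ^ n / (n.factorial : ℝ))) = m * Real.exp m := by
    rw [tsum_mul_left, hE]
  -- g2
  have hg2succ : (fun k : ℕ => ((k + 1 : ℕ) : ℝ) * (m ^ (k + 1 + 1) / (((k + 1).factorial : ℕ) : ℝ)))
      = fun k : ℕ => m ^ 2 * (m ^ k / (k.factorial : ℝ)) := by
    funext k
    have hfs : (((k + 1).factorial : ℕ) : ℝ) = ((k + 1 : ℕ) : ℝ) * (k.factorial : ℝ) := by
      rw [Nat.factorial_succ]; push_cast; ring
    rw [hfs]
    have hk1 : ((k + 1 : ℕ) : ℝ) ≠ 0 := by positivity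
    field_simp
    ring
  have hS2' : Summable (fun k : ℕ => ((k + 1 : ℕ) : ℝ) * (m ^ (k + 1 + 1) / (((k + 1).factorial : ℕ) : ℝ))) := by
    rw [hg2succ]; exact hS.mul_left _
  have hS2 : Summable (fun n : ℕ => (n : ℝ) * (m ^ (n + 1) / ((n.factorial : ℕ) : ℝ))) :=
    (summable_nat_add_iff (f := fun n : ℕ => (n : ℝ) * (m ^ (n + 1) / ((n.factorial : ℕ) : ℝ))) 1).mp hS2'
  have hT2 : (∑' n : ℕ, (n : ℝ) * (m ^ (n + 1) / ((n.factorial : ℕ) : ℝ))) = m ^ 2 * Real.exp m := by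
    rw [Summable.tsum_eq_zero_add hS2]
    simp only [Nat.cast_zero, zero_mul, zero_add]
    rw [hg2succ, tsum_mul_left, hE]
  -- per-term identity
  have hterm : (fun n : ℕ => ((n + 2 : ℕ) : ℝ) * (((n + 2 : ℕ) : ℝ) - (1 + ((n + 2 : ℕ) : ℝ) * lam - lam) * α) *
        (m ^ (n + 1) / (((n + 1).factorial : ℕ) : ℝ)) * E)
      = fun n : ℕ => (A * ((n : ℝ) * (m ^ (n + 1) / ((n.factorial : ℕ) : ℝ)))
          + C1 * (m * (m ^ n / (n.factorial : ℝ)))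
          + C0 * (m ^ (n + 1) / (((n + 1).factorial : ℕ) : ℝ))) * E := by
    funext n
    have hfs : (((n + 1).factorial : ℕ) : ℝ) = ((n : ℝ) + 1) * (n.factorial : ℝ) := by
      rw [Nat.factorial_succ]; push_cast; ring
    have hn1 : ((n : ℝ) + 1) ≠ 0 := by positivity
    rw [hfs]
    push_cast
    field_simp
    ring
  rw [hterm]
  have hsum12 : Summable (fun n : ℕ => A * ((n : ℝ) * (m ^ (n + 1) / ((n.factorial : ℕ) : ℝ)))
      + C1 * (m * (m ^ n / (n.factorial : ℝ)))) := (hS2.mul_left A).add (hS1.mul_left C1)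
  have key : (∑' n : ℕ, (A * ((n : ℝ) * (m ^ (n + 1) / ((n.factorial : ℕ) : ℝ)))
          + C1 * (m * (m ^ n / (n.factorial : ℝ)))
          + C0 * (m ^ (n + 1) / (((n + 1).factorial : ℕ) : ℝ))) * E)
      = (A * (m ^ 2 * Real.exp m) + C1 * (m * Real.exp m) + C0 * (Real.exp m - 1)) * E := by
    rw [tsum_mul_right, Summable.tsum_add hsum12 (hS0.mul_left C0),
      Summable.tsum_add (hS2.mul_left A) (hS1.mul_left C1), tsum_mul_left, tsum_mul_left, tsum_mul_left,
      tsum_mul_left, hT0, hT2, ← hE]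
  rw [key]
  have hEe : E * Real.exp m = 1 := by
    rw [hEdef, ← Real.exp_add]; simp
  have hval : (A * (m ^ 2 * Real.exp m) + C1 * (m * Real.exp m) + C0 * (Real.exp m - 1)) * E
      = (1 - α * lam) * (m ^ 2 + m) + (2 - α * lam - α) * m + (1 - α) * (1 - E) := by
    have : A * (m ^ 2 * Real.exp m) * E + C1 * (m * Real.exp m) * E + C0 * (Real.exp m * E) - C0 * E
        = (1 - α * lam) * (m ^ 2 + m) + (2 - α * lam - α) * m + (1 - α) * (1 - E) := by
      rw [mul_comm (Real.exp m) E, hEe]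
      have h1 : A * (m ^ 2 * Real.exp m) * E = A * m ^ 2 * (E * Real.exp m) := by ring
      have h2 : C1 * (m * Real.exp m) * E = C1 * m * (E * Real.exp m) := by ring
      rw [h1, h2, hEe, hA, hC1, hC0]; ring
    linarith [this]
  rw [hval]
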